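/- arXiv:2602.09700 — 2 statements merged into one kernel-verified Lean document; each statement's English description precedes it below -/
import Mathlib

section
/- Let θ be a finite word over {1, 2} of even length, and let R be a right-infinite word over {1, 2}. For any right-infinite word S over {1,2}, consider the value λ = [0; 1, 1, θ, S] + [2; 2, θ, R] of the cut …θᵀ 1 1 | 2 2 θ R…. Then [0; 1, 1, θ, R] + [2; 2, θ, R] = 3, and consequently [0; 1, 1, θ, S] + [2; 2, θ, R] < 3 whenever [0; 1, 1, θ, S] < [0; 1, 1, θ, R]. -/
/-- Value of a finite continued fraction `[a₀; a₁, …, aₙ]` with real entries. -/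
noncomputable def cfListVal : List ℝ → ℝ
  | [] => 0
  | [x] => x
  | x :: y :: t => x + 1 / cfListVal (y :: t)

/-- Value of the infinite continued fraction `[s 0; s 1, s 2, …]`. -/
noncomputable def cfVal (s : ℕ → ℝ) : ℝ :=
  Filter.limUnder Filter.atTop (fun n => cfListVal ((List.range (n + 1)).map s))

/-- The sequence of partial quotients `[l₀; l₁, …, l_{k−1}, R 0, R 1, …]` obtained by
prepending a finite list to an infinite tail. -/
noncomputable def seqOf (l : List ℕ) (R : ℕ → ℕ) : ℕ → ℝ := fun n =>
  if h : n < l.length then (l.get ⟨n, h⟩ : ℝ) else (R (n - l.length) : ℝ)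



lemma cfListVal_singleton (x : ℝ) : cfListVal [x] = x := rfl

lemma cfListVal_cons (x : ℝ) (l : List ℝ) (hl : l ≠ []) :
    cfListVal (x :: l) = x + 1 / cfListVal l := by
  cases l with
  | nil => simp at hl
  | cons y t => rfl

lemma cfListVal_append_eq : ∀ (w z : List ℝ), z ≠ [] →
    cfListVal (w ++ z) = cfListVal (w ++ [cfListVal z])
  | [], z, hz => by simp [cfListVal_singleton]
  | a :: w, z, hz => by
    rw [List.cons_append, List.cons_append,
        cfListVal_cons _ _ (by simp [hz]),
        cfListVal_cons _ _ (by simp),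
        cfListVal_append_eq w z hz]

lemma cfListVal_bounds : ∀ (u : List ℝ) (t : ℝ), (∀ x ∈ u, 1 ≤ x ∧ x ≤ 2) →
    1 ≤ t → t ≤ 3 → 1 ≤ cfListVal (u ++ [t]) ∧ cfListVal (u ++ [t]) ≤ 3
  | [], t, _, ht1, ht3 => by simpa [cfListVal_singleton] using ⟨ht1, ht3⟩
  | a :: u, t, hu, ht1, ht3 => by
    have IH := cfListVal_bounds u t (fun x hx => hu x (List.mem_cons_of_mem _ hx)) ht1 ht3
    have ha := hu a List.mem_cons_self
    rw [List.cons_append, cfListVal_cons _ _ (by simp)]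
    have h0 : (0:ℝ) < cfListVal (u ++ [t]) := by linarith [IH.1]
    constructor
    · have : (0:ℝ) < 1 / cfListVal (u ++ [t]) := by positivity
      linarith [ha.1]
    · have : 1 / cfListVal (u ++ [t]) ≤ 1 := by
        rw [div_le_one h0]; linarith [IH.1]
      linarith [ha.2]

lemma cfListVal_lower (a : ℝ) (u : List ℝ) (t : ℝ) (ha : 1 ≤ a)
    (hu : ∀ x ∈ u, 1 ≤ x ∧ x ≤ 2) (ht1 : 1 ≤ t) (ht3 : t ≤ 3) :
    4/3 ≤ cfListVal (a :: u ++ [t]) := by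
  have IH := cfListVal_bounds u t hu ht1 ht3
  rw [List.cons_append, cfListVal_cons _ _ (by simp)]
  have h0 : (0:ℝ) < cfListVal (u ++ [t]) := by linarith [IH.1]
  have : (1:ℝ)/3 ≤ 1 / cfListVal (u ++ [t]) := by
    apply one_div_le_one_div_of_le h0 IH.2 |>.trans_eq rfl
  linarith

lemma cfListVal_lip : ∀ (u : List ℝ) (t t' : ℝ), (∀ x ∈ u, 1 ≤ x ∧ x ≤ 2) →
    1 ≤ t → t ≤ 3 → 1 ≤ t' → t' ≤ 3 →
    |cfListVal (u ++ [t]) - cfListVal (u ++ [t'])| ≤ 2 * (9/16)^u.length * |t - t'|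
  | [], t, t', _, ht1, ht3, ht1', ht3' => by
    simp only [List.nil_append, cfListVal_singleton, List.length_nil, pow_zero, mul_one]
    nlinarith [abs_nonneg (t - t')]
  | a :: u, t, t', hu, ht1, ht3, ht1', ht3' => by
    have hu' : ∀ x ∈ u, 1 ≤ x ∧ x ≤ 2 := fun x hx => hu x (List.mem_cons_of_mem _ hx)
    have hA := cfListVal_bounds u t hu' ht1 ht3
    have hB := cfListVal_bounds u t' hu' ht1' ht3'
    set A := cfListVal (u ++ [t]) with hAdef
    set B := cfListVal (u ++ [t']) with hBdef
    have hA0 : (0:ℝ) < A := by linarith [hA.1]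
    have hB0 : (0:ℝ) < B := by linarith [hB.1]
    rw [List.cons_append, List.cons_append, cfListVal_cons _ _ (by simp),
        cfListVal_cons _ _ (by simp)]
    have hstep : a + 1 / A - (a + 1 / B) = (A - B) / (A * B) * (-1) := by
      field_simp; ring
    rw [hstep, abs_mul, abs_neg, abs_one, mul_one, abs_div, abs_mul,
        abs_of_pos hA0, abs_of_pos hB0, List.length_cons]
    rw [div_le_iff₀ (by positivity)]
    cases u with
    | nil =>
      simp only [List.nil_append, cfListVal_singleton] at hAdef hBdef
      rw [hAdef, hBdef]
      simp only [List.length_nil, zero_add, pow_one]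
      have htt : (1:ℝ) ≤ t * t' := by nlinarith
      nlinarith [abs_nonneg (t - t'), mul_le_mul_of_nonneg_left htt (abs_nonneg (t - t'))]
    | cons b u' =>
      have hb := hu' b List.mem_cons_self
      have hu'' : ∀ x ∈ u', 1 ≤ x ∧ x ≤ 2 := fun x hx => hu' x (List.mem_cons_of_mem _ hx)
      have hA4 : 4/3 ≤ A := cfListVal_lower b u' t hb.1 hu'' ht1 ht3
      have hB4 : 4/3 ≤ B := cfListVal_lower b u' t' hb.1 hu'' ht1' ht3'
      have IH := cfListVal_lip (b :: u') t t' hu' ht1 ht3 ht1' ht3'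
      have hAB : (16:ℝ)/9 ≤ A * B := by nlinarith
      calc |A - B| ≤ 2 * (9/16)^(b :: u').length * |t - t'| := IH
        _ = (2 * (9/16)^((b :: u').length + 1) * |t - t'|) * (16/9) := by
              rw [pow_succ]; ring
        _ ≤ (2 * (9/16)^((b :: u').length + 1) * |t - t'|) * (A * B) := by
              apply mul_le_mul_of_nonneg_left hAB (by positivity)

lemma cf_tendsto (s : ℕ → ℝ) (hs : ∀ k, 1 ≤ s (k+1) ∧ s (k+1) ≤ 2) :
    ∃ L, Filter.Tendsto (fun n => cfListVal ((List.range (n+1)).map s))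
      Filter.atTop (nhds L) := by
  apply cauchySeq_tendsto_of_complete
  apply cauchySeq_of_le_geometric (9/16 : ℝ) (64/9) (by norm_num)
  intro n
  rw [Real.dist_eq]
  match n with
  | 0 =>
    have h0 : cfListVal ((List.range 1).map s) = s 0 := by
      simp [List.range_succ, cfListVal_singleton]
    have h1 : cfListVal ((List.range 2).map s) = s 0 + 1 / s 1 := by
      have h2 : (List.range 2).map s = [s 0, s 1] := by simp [List.range_succ]
      rw [h2, cfListVal_cons _ _ (by simp), cfListVal_singleton]
    simp only [h0, h1, pow_zero, mul_one]
    have hs1 := hs 0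
    have hpos : (0:ℝ) < s 1 := by linarith [hs1.1]
    have he : s 0 - (s 0 + 1 / s 1) = -(1 / s 1) := by ring
    rw [he, abs_neg, abs_of_pos (by positivity)]
    rw [div_le_iff₀ hpos]
    nlinarith [hs1.1]
  | (m+1) =>
    set u : List ℝ := (List.range m).map (s ∘ Nat.succ) with hudef
    have hu : ∀ x ∈ u, 1 ≤ x ∧ x ≤ 2 := by
      intro x hx
      rw [hudef, List.mem_map] at hx
      obtain ⟨k, _, rfl⟩ := hx
      exact hs k
    have hulen : u.length = m := by simp [hudef]
    have e1 : (List.range (m+2)).map s = s 0 :: (u ++ [s (m+1)]) := by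
      rw [List.range_succ_eq_map, List.map_cons, List.map_map, List.range_succ,
          List.map_append, hudef]
      rfl
    have e2 : (List.range (m+3)).map s = s 0 :: (u ++ [s (m+1), s (m+2)]) := by
      have : List.range (m+2) = List.range m ++ [m, m+1] := by
        rw [List.range_succ, List.range_succ, List.append_assoc]; rfl
      rw [List.range_succ_eq_map, List.map_cons, List.map_map, this,
          List.map_append, hudef]
      rfl
    have hsm1 := hs m
    have hsm2 := hs (m+1)
    set v : ℝ := cfListVal [s (m+1), s (m+2)] with hvdef
    have hv : v = s (m+1) + 1 / s (m+2) := by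
      rw [hvdef, cfListVal_cons _ _ (by simp), cfListVal_singleton]
    have hsm2pos : (0:ℝ) < s (m+2) := by linarith [hsm2.1]
    have hv1 : 1 ≤ v := by
      rw [hv]; have : (0:ℝ) < 1 / s (m+2) := by positivity
      linarith [hsm1.1]
    have hv3 : v ≤ 3 := by
      rw [hv]
      have : 1 / s (m+2) ≤ 1 := by rw [div_le_one hsm2pos]; linarith [hsm2.1]
      linarith [hsm1.2]
    have hA := cfListVal_bounds u (s (m+1)) hu hsm1.1 (by linarith [hsm1.2])
    have hB := cfListVal_bounds u v hu hv1 hv3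
    set A := cfListVal (u ++ [s (m+1)]) with hAdef
    set B := cfListVal (u ++ [v]) with hBdef
    have hA0 : (0:ℝ) < A := by linarith [hA.1]
    have hB0 : (0:ℝ) < B := by linarith [hB.1]
    have hlip := cfListVal_lip u (s (m+1)) v hu hsm1.1 (by linarith [hsm1.2]) hv1 hv3
    rw [hulen] at hlip
    have happ : cfListVal (u ++ [s (m+1), s (m+2)]) = B := by
      rw [hBdef]
      exact cfListVal_append_eq u [s (m+1), s (m+2)] (by simp)
    rw [e1, e2, cfListVal_cons _ _ (by simp), cfListVal_cons _ _ (by simp),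
        happ, ← hAdef]
    have he : s 0 + 1 / A - (s 0 + 1 / B) = (B - A) / (A * B) := by
      field_simp; ring
    rw [he, abs_div, abs_of_pos (by positivity : (0:ℝ) < A * B)]
    rw [div_le_iff₀ (by positivity)]
    have habs : |B - A| = |A - B| := abs_sub_comm _ _
    have hd : |s (m+1) - v| ≤ 2 := by
      rw [abs_le]; constructor <;> nlinarith [hsm1.1, hsm1.2]
    have hAB1 : (1:ℝ) ≤ A * B := by nlinarith
    have hpow : (0:ℝ) < (9/16:ℝ)^m := by positivity
    calc |B - A| = |A - B| := habs
      _ ≤ 2 * (9/16)^m * |s (m+1) - v| := hlip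
      _ ≤ 2 * (9/16)^m * 2 := by nlinarith
      _ = 64/9 * (9/16)^(m+1) * 1 := by rw [pow_succ]; ring
      _ ≤ 64/9 * (9/16)^(m+1) * (A * B) := by
          apply mul_le_mul_of_nonneg_left hAB1 (by positivity)

lemma seqOf_zero (a : ℕ) (l : List ℕ) (R : ℕ → ℕ) : seqOf (a :: l) R 0 = a := by
  simp [seqOf]

lemma seqOf_succ (a : ℕ) (l : List ℕ) (R : ℕ → ℕ) (n : ℕ) :
    seqOf (a :: l) R (n + 1) = seqOf l R n := by
  unfold seqOf
  by_cases h : n < l.length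
  · rw [dif_pos (by simpa using Nat.succ_lt_succ h), dif_pos h]
    simp
  · rw [dif_neg (by simp; omega), dif_neg h]
    congr 1
    simp

lemma map_range_seqOf (a : ℕ) (l : List ℕ) (R : ℕ → ℕ) (n : ℕ) :
    (List.range (n + 1)).map (seqOf (a :: l) R)
      = (a : ℝ) :: (List.range n).map (seqOf l R) := by
  rw [List.range_succ_eq_map, List.map_cons, List.map_map]
  congr 1
  · exact List.map_congr_left fun k _ => seqOf_succ a l R k

lemma seqOf_bounds (θ : List ℕ) (R : ℕ → ℕ) (hθ : ∀ x ∈ θ, x = 1 ∨ x = 2)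
    (hR : ∀ n, R n = 1 ∨ R n = 2) (k : ℕ) :
    1 ≤ seqOf θ R k ∧ seqOf θ R k ≤ 2 := by
  unfold seqOf
  split
  case isTrue h =>
    rcases hθ (θ.get ⟨k, h⟩) (List.get_mem _ _) with h1 | h1 <;> rw [h1] <;> norm_num
  case isFalse h =>
    rcases hR (k - θ.length) with h1 | h1 <;> rw [h1] <;> norm_num

lemma cf_sum_three (t : ℝ) (ht : 1 ≤ t) :
    cfListVal [(0:ℝ), 1, 1, t] + cfListVal [(2:ℝ), 2, t] = 3 := by
  have ht0 : (0:ℝ) < t := by linarith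
  have h1 : (0:ℝ) < 1 + 1 / t := by positivity
  have h2 : (0:ℝ) < 1 + 1 / (1 + 1 / t) := by positivity
  have h3 : (0:ℝ) < 2 + 1 / t := by positivity
  simp only [cfListVal]
  field_simp
  ring

/-- For `θ` a finite word over `{1,2}` of even length and `R, S` infinite words over
`{1,2}`: if `[0;1,1,θ,S] < [0;1,1,θ,R]` then `[0;1,1,θ,S] + [2;2,θ,R] < 3`; and
`[0;1,1,θ,R] + [2;2,θ,R] = 3`. -/
theorem cut_value_even_palindromic_identity (θ : List ℕ)
    (hθlen : θ.length % 2 = 0) (hθ : ∀ x ∈ θ, x = 1 ∨ x = 2)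
    (R S : ℕ → ℕ) (hR : ∀ n, R n = 1 ∨ R n = 2) (hS : ∀ n, S n = 1 ∨ S n = 2) :
    (cfVal (seqOf (0 :: 1 :: 1 :: θ) S) < cfVal (seqOf (0 :: 1 :: 1 :: θ) R) →
      cfVal (seqOf (0 :: 1 :: 1 :: θ) S) + cfVal (seqOf (2 :: 2 :: θ) R) < 3) ∧
    cfVal (seqOf (0 :: 1 :: 1 :: θ) R) + cfVal (seqOf (2 :: 2 :: θ) R) = 3 := by
  have htail := seqOf_bounds θ R hθ hR
  -- entries of the first sequence, from position 1 on, lie in [1,2]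
  have hseq1 : ∀ k, 1 ≤ seqOf (0 :: 1 :: 1 :: θ) R (k + 1) ∧
      seqOf (0 :: 1 :: 1 :: θ) R (k + 1) ≤ 2 := by
    intro k
    match k with
    | 0 => rw [seqOf_succ, seqOf_zero]; norm_num
    | 1 => rw [seqOf_succ, seqOf_succ, seqOf_zero]; norm_num
    | (m+2) => rw [seqOf_succ, seqOf_succ, seqOf_succ]; exact htail m
  obtain ⟨L, hL⟩ := cf_tendsto (seqOf (0 :: 1 :: 1 :: θ) R) hseq1
  have hx : cfVal (seqOf (0 :: 1 :: 1 :: θ) R) = L := hL.limUnder_eq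
  -- finite truncation identity
  have key : ∀ n, cfListVal ((List.range (n + 4)).map (seqOf (0 :: 1 :: 1 :: θ) R))
      + cfListVal ((List.range (n + 3)).map (seqOf (2 :: 2 :: θ) R)) = 3 := by
    intro n
    have r4 : n + 4 = (n + 3) + 1 := rfl
    have r3 : n + 3 = (n + 2) + 1 := rfl
    have r2 : n + 2 = (n + 1) + 1 := rfl
    rw [r4, map_range_seqOf, r3, map_range_seqOf, map_range_seqOf, r2,
        map_range_seqOf, map_range_seqOf]
    set w := (List.range (n + 1)).map (seqOf θ R) with hwdef
    have hwne : w ≠ [] := by simp [hwdef]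
    have hw' : w = (List.range n).map (seqOf θ R) ++ [seqOf θ R n] := by
      rw [hwdef, List.range_succ, List.map_append]; rfl
    have hub : ∀ x ∈ (List.range n).map (seqOf θ R), 1 ≤ x ∧ x ≤ 2 := by
      intro x hx
      rw [List.mem_map] at hx
      obtain ⟨k, _, rfl⟩ := hx
      exact htail k
    have ht : 1 ≤ cfListVal w ∧ cfListVal w ≤ 3 := by
      rw [hw']
      exact cfListVal_bounds _ _ hub (htail n).1 (by linarith [(htail n).2])
    have e1 : cfListVal ((↑(0:ℕ) : ℝ) :: ↑(1:ℕ) :: ↑(1:ℕ) :: w) =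
        cfListVal [(↑(0:ℕ) : ℝ), ↑(1:ℕ), ↑(1:ℕ), cfListVal w] :=
      cfListVal_append_eq [(↑(0:ℕ) : ℝ), ↑(1:ℕ), ↑(1:ℕ)] w hwne
    have e2 : cfListVal ((↑(2:ℕ) : ℝ) :: ↑(2:ℕ) :: w) =
        cfListVal [(↑(2:ℕ) : ℝ), ↑(2:ℕ), cfListVal w] :=
      cfListVal_append_eq [(↑(2:ℕ) : ℝ), ↑(2:ℕ)] w hwne
    rw [e1, e2]
    push_cast
    exact cf_sum_three _ ht.1
  have hg2 : Filter.Tendsto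
      (fun n => cfListVal ((List.range (n + 2 + 1)).map (seqOf (2 :: 2 :: θ) R)))
      Filter.atTop (nhds (3 - L)) := by
    have hshift : Filter.Tendsto
        (fun n => cfListVal ((List.range (n + 3 + 1)).map (seqOf (0 :: 1 :: 1 :: θ) R)))
        Filter.atTop (nhds L) := hL.comp (Filter.tendsto_add_atTop_nat 3)
    have hsub := Filter.Tendsto.sub (tendsto_const_nhds (x := (3:ℝ))) hshift
    refine hsub.congr fun n => ?_
    rw [show n + 3 + 1 = n + 4 from rfl, show n + 2 + 1 = n + 3 from rfl]
    linarith [key n]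
  have hg : Filter.Tendsto
      (fun n => cfListVal ((List.range (n + 1)).map (seqOf (2 :: 2 :: θ) R)))
      Filter.atTop (nhds (3 - L)) :=
    (Filter.tendsto_add_atTop_iff_nat
      (f := fun n => cfListVal ((List.range (n + 1)).map (seqOf (2 :: 2 :: θ) R))) 2).mp hg2
  have hy : cfVal (seqOf (2 :: 2 :: θ) R) = 3 - L := hg.limUnder_eq
  refine ⟨fun h => ?_, by rw [hx, hy]; ring⟩
  rw [hx] at h
  rw [hy]
  linarith
end

section
/- Let γ = [\overline{a₀; a₁, …, aₘ}] be a purely periodic continued fraction (all aᵢ positive integers) with quadratic irrational value γ, and let γ̄ be its Galois conjugate. Then −1/γ̄ = [\overline{aₘ; a_{m−1}, …, a₀}], the purely periodic continued fraction with reversed period. -/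
/-- Value of the purely periodic continued fraction with period the list `l`. -/
noncomputable def perVal (l : List ℕ) : ℝ :=
  cfVal (fun n => (l.getD (n % l.length) 1 : ℝ))

/-!
Write `M = !![A, B; C, D]` for the product of the matrices `!![aᵢ, 1; 1, 0]` over the period. Since
`γ` is the limit of the convergents, which are read off from such products, `γ` is a fixed point of the
Möbius map of `M`, i.e. a root of `C X² + (D - A) X - B`. The reversed period has matrix `Mᵀ`, so
`δ = [\overline{aₘ; …, a₀}]` is a root of `B X² + (D - A) X - C`. As `γ` is irrational, Vieta's
formula `C γ γ̄ = -B` holds, so `-1/γ̄ = C γ / B`, which is a positive root of the second quadratic.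
Its constant term is negative, so it has only one positive root, and that root is `δ`.
-/

open Filter Topology Matrix

section Matrices

variable {R : Type*}

def cfMatrix [Semiring R] (a : R) : Matrix (Fin 2) (Fin 2) R := !![a, 1; 1, 0]

def cfMatrixProd [Semiring R] (u : List R) : Matrix (Fin 2) (Fin 2) R := (u.map cfMatrix).prod

section Semiring

variable [Semiring R]

@[simp]
lemma cfMatrix_mul_apply_zero (a : R) (M : Matrix (Fin 2) (Fin 2) R) (j : Fin 2) :
    (cfMatrix a * M) 0 j = a * M 0 j + M 1 j := by
  simp [cfMatrix, Matrix.mul_apply, Fin.sum_univ_two]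

@[simp]
lemma cfMatrix_mul_apply_one (a : R) (M : Matrix (Fin 2) (Fin 2) R) (j : Fin 2) :
    (cfMatrix a * M) 1 j = M 0 j := by
  simp [cfMatrix, Matrix.mul_apply, Fin.sum_univ_two]

@[simp]
lemma mul_cfMatrix_apply_zero (M : Matrix (Fin 2) (Fin 2) R) (a : R) (i : Fin 2) :
    (M * cfMatrix a) i 0 = M i 0 * a + M i 1 := by
  simp [cfMatrix, Matrix.mul_apply, Fin.sum_univ_two]

@[simp]
lemma mul_cfMatrix_apply_one (M : Matrix (Fin 2) (Fin 2) R) (a : R) (i : Fin 2) :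
    (M * cfMatrix a) i 1 = M i 0 := by
  simp [cfMatrix, Matrix.mul_apply, Fin.sum_univ_two]

@[simp]
lemma cfMatrixProd_nil : cfMatrixProd ([] : List R) = 1 := rfl

lemma cfMatrixProd_cons (a : R) (u : List R) :
    cfMatrixProd (a :: u) = cfMatrix a * cfMatrixProd u := by
  simp [cfMatrixProd]

lemma cfMatrixProd_append (u v : List R) :
    cfMatrixProd (u ++ v) = cfMatrixProd u * cfMatrixProd v := by
  simp [cfMatrixProd]

lemma cfMatrixProd_map {S : Type*} [Semiring S] (f : R →+* S) (u : List R) :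
    cfMatrixProd (u.map f) = (cfMatrixProd u).map f := by
  rw [cfMatrixProd, cfMatrixProd, ← RingHom.mapMatrix_apply, map_list_prod, List.map_map,
    List.map_map]
  congr 2
  ext a i j
  fin_cases i <;> fin_cases j <;> simp [cfMatrix]

end Semiring

lemma cfMatrixProd_reverse [CommSemiring R] (u : List R) :
    cfMatrixProd u.reverse = (cfMatrixProd u)ᵀ := by
  have hsymm : ∀ a : R, (cfMatrix a)ᵀ = cfMatrix a := fun a => by
    ext i j
    fin_cases i <;> fin_cases j <;> rfl
  simp [cfMatrixProd, transpose_list_prod, List.map_reverse, Function.comp_def, hsymm]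

lemma det_cfMatrixProd [CommRing R] (u : List R) : (cfMatrixProd u).det = (-1) ^ u.length := by
  induction u with
  | nil => simp
  | cons a u ih =>
    rw [cfMatrixProd_cons, det_mul, ih, cfMatrix, det_fin_two_of, List.length_cons, pow_succ]
    ring

end Matrices

lemma one_le_cfMatrixProd {u : List ℝ} (hu : u ≠ []) (h : ∀ x ∈ u, 1 ≤ x) :
    1 ≤ cfMatrixProd u 0 0 ∧ 1 ≤ cfMatrixProd u 0 1 ∧ 1 ≤ cfMatrixProd u 1 0 ∧
      0 ≤ cfMatrixProd u 1 1 := by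
  induction u with
  | nil => exact absurd rfl hu
  | cons a t ih =>
    have ha : 1 ≤ a := h a List.mem_cons_self
    rcases eq_or_ne t [] with rfl | ht
    · simp [cfMatrixProd_cons, ha, cfMatrix]
    · obtain ⟨h00, h01, h10, h11⟩ := ih ht fun x hx => h x (List.mem_cons_of_mem a hx)
      simp only [cfMatrixProd_cons, cfMatrix_mul_apply_zero, cfMatrix_mul_apply_one]
      exact ⟨by nlinarith, by nlinarith, h00, by linarith⟩

noncomputable def mobius (M : Matrix (Fin 2) (Fin 2) ℝ) (x : ℝ) : ℝ :=
  (M 0 0 * x + M 0 1) / (M 1 0 * x + M 1 1)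

lemma mobius_eq_self_iff {M : Matrix (Fin 2) (Fin 2) ℝ} {x : ℝ} (hx : M 1 0 * x + M 1 1 ≠ 0) :
    mobius M x = x ↔ M 1 0 * x ^ 2 + (M 1 1 - M 0 0) * x - M 0 1 = 0 := by
  rw [mobius, div_eq_iff hx]
  constructor <;> intro h <;> linear_combination -h

lemma continuousAt_mobius {M : Matrix (Fin 2) (Fin 2) ℝ} {x : ℝ} (hx : M 1 0 * x + M 1 1 ≠ 0) :
    ContinuousAt (mobius M) x := by
  unfold mobius
  fun_prop (disch := exact hx)

lemma cfListVal_cons_s16 {a : ℝ} {u : List ℝ} (hu : u ≠ []) :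
    cfListVal (a :: u) = a + 1 / cfListVal u := by
  cases u with
  | nil => exact absurd rfl hu
  | cons y t => rfl

lemma one_le_cfListVal {u : List ℝ} (hu : u ≠ []) (h : ∀ x ∈ u, 1 ≤ x) : 1 ≤ cfListVal u := by
  induction u with
  | nil => exact absurd rfl hu
  | cons a t ih =>
    have ha : 1 ≤ a := h a List.mem_cons_self
    rcases eq_or_ne t [] with rfl | ht
    · exact ha
    · have := ih ht fun x hx => h x (List.mem_cons_of_mem a hx)
      rw [cfListVal_cons_s16 ht]
      have : 0 < 1 / cfListVal t := by positivity
      linarith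

lemma cfListVal_eq_div {u : List ℝ} (hu : u ≠ []) (h : ∀ x ∈ u, 1 ≤ x) :
    cfListVal u = cfMatrixProd u 0 0 / cfMatrixProd u 1 0 := by
  induction u with
  | nil => exact absurd rfl hu
  | cons a t ih =>
    rcases eq_or_ne t [] with rfl | ht
    · simp [cfListVal, cfMatrixProd_cons]
    · have ht1 : ∀ x ∈ t, 1 ≤ x := fun x hx => h x (List.mem_cons_of_mem a hx)
      have h00 : cfMatrixProd t 0 0 ≠ 0 := by linarith [(one_le_cfMatrixProd ht ht1).1]
      rw [cfListVal_cons_s16 ht, ih ht ht1, cfMatrixProd_cons, cfMatrix_mul_apply_zero,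
        cfMatrix_mul_apply_one]
      field_simp

lemma cfListVal_append {u r : List ℝ} (hu1 : ∀ x ∈ u, 1 ≤ x) (hr : r ≠ [])
    (hr1 : ∀ x ∈ r, 1 ≤ x) :
    cfListVal (u ++ r) = mobius (cfMatrixProd u) (cfListVal r) := by
  have hur1 : ∀ x ∈ u ++ r, 1 ≤ x := fun x hx => (List.mem_append.mp hx).elim (hu1 x) (hr1 x)
  have hr10 : cfMatrixProd r 1 0 ≠ 0 := by linarith [(one_le_cfMatrixProd hr hr1).2.2.1]
  rw [cfListVal_eq_div (List.append_ne_nil_of_right_ne_nil u hr) hur1, cfListVal_eq_div hr hr1,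
    cfMatrixProd_append, mobius, ← div_div_div_cancel_right₀ hr10]
  simp only [Matrix.mul_apply, Fin.sum_univ_two]
  congr 1 <;> field_simp

section Convergence

variable {s : ℕ → ℝ}

/-- With the convergents `pₖ / qₖ` of `[s 0; s 1, …]`, this is `!![pₙ₋₁, pₙ₋₂; qₙ₋₁, qₙ₋₂]`. -/
def convMatrix (s : ℕ → ℝ) (n : ℕ) : Matrix (Fin 2) (Fin 2) ℝ :=
  cfMatrixProd ((List.range n).map s)

lemma convMatrix_succ (s : ℕ → ℝ) (n : ℕ) :
    convMatrix s (n + 1) = convMatrix s n * cfMatrix (s n) := by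
  simp [convMatrix, List.range_succ, cfMatrixProd]

lemma range_map_ne_nil (s : ℕ → ℝ) (n : ℕ) : (List.range (n + 1)).map s ≠ [] := by simp

lemma one_le_of_mem_range_map (hs : ∀ n, 1 ≤ s n) (n : ℕ) : ∀ x ∈ (List.range n).map s, 1 ≤ x := by
  simp only [List.mem_map]
  rintro _ ⟨i, -, rfl⟩
  exact hs i

lemma one_le_convMatrix (hs : ∀ n, 1 ≤ s n) (n : ℕ) :
    1 ≤ convMatrix s (n + 1) 0 0 ∧ 1 ≤ convMatrix s (n + 1) 0 1 ∧ 1 ≤ convMatrix s (n + 1) 1 0 ∧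
      0 ≤ convMatrix s (n + 1) 1 1 :=
  one_le_cfMatrixProd (range_map_ne_nil s n) (one_le_of_mem_range_map hs _)

lemma cfListVal_range_eq_div (hs : ∀ n, 1 ≤ s n) (n : ℕ) :
    cfListVal ((List.range (n + 1)).map s) = convMatrix s (n + 1) 0 0 / convMatrix s (n + 1) 1 0 :=
  cfListVal_eq_div (range_map_ne_nil s n) (one_le_of_mem_range_map hs _)

lemma convMatrix_denom_growth (hs : ∀ n, 1 ≤ s n) (n : ℕ) :
    convMatrix s (n + 1) 1 1 ≤ convMatrix s (n + 1) 1 0 ∧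
      (n + 1 : ℝ) ≤ convMatrix s (n + 1) 1 0 + convMatrix s (n + 1) 1 1 := by
  induction n with
  | zero => simp [convMatrix, cfMatrixProd, cfMatrix]
  | succ n ih =>
    obtain ⟨-, -, h10, h11⟩ := one_le_convMatrix hs n
    rw [convMatrix_succ s (n + 1), mul_cfMatrix_apply_zero, mul_cfMatrix_apply_one]
    push_cast
    constructor <;> nlinarith [hs (n + 1)]

lemma dist_cfListVal_range_le (hs : ∀ n, 1 ≤ s n) (n : ℕ) :
    dist (cfListVal ((List.range (n + 1)).map s)) (cfListVal ((List.range (n + 1 + 1)).map s)) ≤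
      4 / ((n : ℝ) + 1) ^ 2 := by
  obtain ⟨-, -, hq, hM11⟩ := one_le_convMatrix hs n
  obtain ⟨hle, hgrow⟩ := convMatrix_denom_growth hs n
  have hdet : |(convMatrix s (n + 1)).det| = 1 := by
    rw [convMatrix, det_cfMatrixProd]
    simp
  rw [det_fin_two] at hdet
  rw [cfListVal_range_eq_div hs, cfListVal_range_eq_div hs, convMatrix_succ s (n + 1),
    mul_cfMatrix_apply_zero, mul_cfMatrix_apply_zero, Real.dist_eq]
  set M := convMatrix s (n + 1)
  set a := s (n + 1)
  have hq' : M 1 0 ≤ M 1 0 * a + M 1 1 := by nlinarith [hs (n + 1)]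
  have hq'0 : 0 < M 1 0 * a + M 1 1 := by linarith
  have hqq' : 0 < M 1 0 * (M 1 0 * a + M 1 1) := mul_pos (by linarith) hq'0
  have hdiff : M 0 0 / M 1 0 - (M 0 0 * a + M 0 1) / (M 1 0 * a + M 1 1) =
      (M 0 0 * M 1 1 - M 0 1 * M 1 0) / (M 1 0 * (M 1 0 * a + M 1 1)) := by
    rw [div_sub_div _ _ (by linarith) hq'0.ne']
    ring
  rw [hdiff, abs_div, hdet, abs_of_pos hqq', div_le_div_iff₀ hqq' (by positivity)]
  nlinarith

lemma summable_four_div_succ_sq : Summable fun n : ℕ => 4 / ((n : ℝ) + 1) ^ 2 := by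
  have h := ((summable_nat_add_iff 1).mpr (Real.summable_one_div_nat_pow.mpr one_lt_two)).mul_left 4
  refine h.congr fun n => ?_
  push_cast
  ring

lemma tendsto_cfVal (hs : ∀ n, 1 ≤ s n) :
    Tendsto (fun n => cfListVal ((List.range (n + 1)).map s)) atTop (𝓝 (cfVal s)) := by
  obtain ⟨x, hx⟩ := cauchySeq_tendsto_of_complete <|
    cauchySeq_of_dist_le_of_summable _ (dist_cfListVal_range_le hs) summable_four_div_succ_sq
  rwa [cfVal, hx.limUnder_eq]

lemma one_le_cfVal (hs : ∀ n, 1 ≤ s n) : 1 ≤ cfVal s :=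
  ge_of_tendsto' (tendsto_cfVal hs) fun n =>
    one_le_cfListVal (range_map_ne_nil s n) (one_le_of_mem_range_map hs _)

lemma range_add_map_of_periodic {α : Type*} {f : ℕ → α} {L : ℕ} (h : Function.Periodic f L)
    (n : ℕ) : (List.range (L + n)).map f = (List.range L).map f ++ (List.range n).map f := by
  rw [List.range_add, List.map_append, List.map_map]
  congr 1
  exact List.map_congr_left fun i _ => by simp [add_comm L i, h i]

theorem cfVal_quadratic_of_periodic (hs : ∀ n, 1 ≤ s n) {L : ℕ} (hper : Function.Periodic s L)
    (hL : L ≠ 0) :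
    convMatrix s L 1 0 * cfVal s ^ 2 + (convMatrix s L 1 1 - convMatrix s L 0 0) * cfVal s -
      convMatrix s L 0 1 = 0 := by
  obtain ⟨k, rfl⟩ := Nat.exists_eq_succ_of_ne_zero hL
  obtain ⟨-, -, hC, hD⟩ := one_le_convMatrix hs k
  have hden : convMatrix s (k + 1) 1 0 * cfVal s + convMatrix s (k + 1) 1 1 ≠ 0 := by
    nlinarith [one_le_cfVal hs]
  have hshift : ∀ n, cfListVal ((List.range (k + 1 + n + 1)).map s) =
      mobius (convMatrix s (k + 1)) (cfListVal ((List.range (n + 1)).map s)) := fun n => by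
    rw [add_assoc, range_add_map_of_periodic hper, convMatrix,
      cfListVal_append (one_le_of_mem_range_map hs _) (range_map_ne_nil s n)
        (one_le_of_mem_range_map hs _)]
  have hlim := (Filter.tendsto_add_atTop_iff_nat (k + 1)).mpr (tendsto_cfVal hs)
  refine (mobius_eq_self_iff hden).mp <| tendsto_nhds_unique
    ((continuousAt_mobius hden).tendsto.comp (tendsto_cfVal hs)) (hlim.congr fun n => ?_)
  rw [add_comm n]
  exact hshift n

end Convergence

def perSeq (l : List ℕ) (n : ℕ) : ℝ := l.getD (n % l.length) 1

lemma perVal_eq_cfVal (l : List ℕ) : perVal l = cfVal (perSeq l) := rfl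

lemma perSeq_periodic (l : List ℕ) : Function.Periodic (perSeq l) l.length := fun n => by
  simp [perSeq]

lemma one_le_perSeq {l : List ℕ} (hl : l ≠ []) (hpos : ∀ x ∈ l, 1 ≤ x) (n : ℕ) :
    1 ≤ perSeq l n := by
  have hlt : n % l.length < l.length := Nat.mod_lt _ (List.length_pos_iff.mpr hl)
  rw [perSeq, List.getD_eq_getElem l 1 hlt]
  exact_mod_cast hpos _ (List.getElem_mem hlt)

lemma convMatrix_perSeq_length (l : List ℕ) :
    convMatrix (perSeq l) l.length = (cfMatrixProd l).map (Nat.cast : ℕ → ℝ) := by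
  have hlist : (List.range l.length).map (perSeq l) = l.map (Nat.castRingHom ℝ) := by
    refine List.ext_getElem (by simp) fun i h _ => ?_
    have hi : i < l.length := by simpa using h
    simp [perSeq, Nat.mod_eq_of_lt hi, List.getElem?_eq_getElem hi]
  rw [convMatrix, hlist, cfMatrixProd_map]
  rfl

theorem perVal_quadratic {l : List ℕ} (hl : l ≠ []) (hpos : ∀ x ∈ l, 1 ≤ x) :
    ((cfMatrixProd l 1 0 : ℕ) : ℝ) * perVal l ^ 2 +
      (((cfMatrixProd l 1 1 : ℕ) : ℝ) - cfMatrixProd l 0 0) * perVal l - cfMatrixProd l 0 1 = 0 := by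
  have hs := one_le_perSeq hl hpos
  have h := cfVal_quadratic_of_periodic hs (perSeq_periodic l) (List.length_pos_iff.mpr hl).ne'
  simpa only [convMatrix_perSeq_length, Matrix.map_apply, perVal_eq_cfVal] using h

lemma one_le_perVal {l : List ℕ} (hl : l ≠ []) (hpos : ∀ x ∈ l, 1 ≤ x) : 1 ≤ perVal l :=
  one_le_cfVal (one_le_perSeq hl hpos)

lemma Irrational.mul_mul_conj_eq {x y : ℝ} (hx : Irrational x) {a b c : ℚ}
    (hroot : a * x ^ 2 + b * x + c = 0) (hsum : ∃ σ : ℚ, x + y = σ) (hprod : ∃ τ : ℚ, x * y = τ) :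
    a * (x * y) = c := by
  obtain ⟨σ, hσ⟩ := hsum
  obtain ⟨τ, hτ⟩ := hprod
  -- `x² = σ x - τ` turns the quadratic relation into a rational linear one
  have hlin : ((b + a * σ : ℚ) : ℝ) * x + ((c - a * τ : ℚ) : ℝ) = 0 := by
    push_cast
    linear_combination hroot - a * (x * hσ - hτ)
  have hb : b + a * σ = 0 := by
    by_contra hb
    exact ((hx.ratCast_mul hb).add_ratCast _).ne_rat 0 (by rw [hlin, Rat.cast_zero])
  rw [hb] at hlin
  rw [hτ]
  push_cast at hlin
  linarith

lemma eq_of_quadratic_eq_zero_of_pos {b e c x y : ℝ} (hb : 0 ≤ b) (hc : 0 < c) (hx : 0 < x)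
    (hy : 0 < y) (hxq : b * x ^ 2 + e * x - c = 0) (hyq : b * y ^ 2 + e * y - c = 0) : x = y := by
  have hfac : (x - y) * (b * (x + y) + e) = 0 := by linear_combination hxq - hyq
  rcases mul_eq_zero.mp hfac with h | h
  · linarith
  · nlinarith [mul_nonneg (mul_nonneg hb hx.le) hy.le]

lemma one_le_cfMatrixProd_natCast {l : List ℕ} (hl : l ≠ []) (hpos : ∀ x ∈ l, 1 ≤ x) :
    (1 : ℝ) ≤ cfMatrixProd l 0 1 ∧ (1 : ℝ) ≤ cfMatrixProd l 1 0 := by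
  have h := one_le_cfMatrixProd (u := l.map (Nat.castRingHom ℝ)) (by simpa using hl)
    (by simpa using hpos)
  rw [cfMatrixProd_map] at h
  exact ⟨h.2.1, h.2.2.1⟩

theorem galois_reversed_period_general (l : List ℕ) (hl : l ≠ []) (hpos : ∀ x ∈ l, 1 ≤ x)
    (hirr : Irrational (perVal l)) (gbar : ℝ)
    (hsum : ∃ s : ℚ, perVal l + gbar = (s : ℝ))
    (hprod : ∃ t : ℚ, perVal l * gbar = (t : ℝ)) :
    -1 / gbar = perVal l.reverse := by
  have hrev : l.reverse ≠ [] ∧ ∀ x ∈ l.reverse, 1 ≤ x := ⟨by simpa using hl, by simpa using hpos⟩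
  have hγ := perVal_quadratic hl hpos
  have hδ := perVal_quadratic hrev.1 hrev.2
  simp only [cfMatrixProd_reverse, Matrix.transpose_apply] at hδ
  have hvieta := hirr.mul_mul_conj_eq (y := gbar) (a := (cfMatrixProd l 1 0 : ℕ))
    (b := ((cfMatrixProd l 1 1 : ℕ) : ℚ) - (cfMatrixProd l 0 0 : ℕ))
    (c := -((cfMatrixProd l 0 1 : ℕ) : ℚ))
    (by push_cast; linear_combination hγ) hsum hprod
  push_cast at hvieta
  obtain ⟨hB, hC⟩ := one_le_cfMatrixProd_natCast hl hpos
  set B : ℝ := ((cfMatrixProd l 0 1 : ℕ) : ℝ)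
  set C : ℝ := ((cfMatrixProd l 1 0 : ℕ) : ℝ)
  have hB0 : B ≠ 0 := by linarith
  have hconj : -1 / gbar = C * perVal l / B := by
    have hgbar : gbar ≠ 0 := by rintro rfl; rw [mul_zero, mul_zero] at hvieta; linarith
    field_simp
    linear_combination -hvieta
  rw [hconj]
  refine eq_of_quadratic_eq_zero_of_pos (by linarith) (by linarith) ?_ ?_ ?_ hδ
  · exact div_pos (mul_pos (by linarith) (by linarith [one_le_perVal hl hpos])) (by linarith)
  · linarith [one_le_perVal hrev.1 hrev.2]
  · field_simp
    linear_combination C * hγ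

/-- Galois: if `γ = [\overline{a₀; a₁, …, aₘ}]` is purely periodic (a quadratic
irrational) and `γ̄` is its Galois conjugate (characterized by `γ̄ ≠ γ`,
`γ + γ̄ ∈ ℚ`, `γ·γ̄ ∈ ℚ`), then `−1/γ̄ = [\overline{aₘ; a_{m−1}, …, a₀}]`. -/
theorem galois_reversed_period (l : List ℕ) (hl : l ≠ []) (hpos : ∀ x ∈ l, 1 ≤ x)
    (hirr : Irrational (perVal l)) (gbar : ℝ) (hne : gbar ≠ perVal l)
    (hsum : ∃ s : ℚ, perVal l + gbar = (s : ℝ))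
    (hprod : ∃ t : ℚ, perVal l * gbar = (t : ℝ)) :
    -1 / gbar = perVal l.reverse :=
  galois_reversed_period_general l hl hpos hirr gbar hsum hprod
end
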